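/- Let p ∈ ℝ and suppose H ∈ C¹(ℝ), H' bounded and continuous, with lim_{x→±∞} |x|^p H'(x) = h̃_± for nonzero constants h̃_±, and |x|^p H'(x) uniformly bounded. Then the Melnikov function S(ψ) = ∫_ℝ H'(y + ψ/√2)·W_h(y) dy satisfies lim_{ψ→±∞} |ψ|^p S(ψ) = (1/3)·2^{(p+3)/2}·h̃_±. -/

import Mathlib

set_option maxHeartbeats 1000000

open Real Filter Topology MeasureTheory Set

/-- The Melnikov weight `W_h(y) = tanh²((√2/2)y)(1 − tanh²((√2/2)y))`. -/
noncomputable def Wh (y : ℝ) : ℝ :=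
  (Real.tanh (Real.sqrt 2 / 2 * y)) ^ 2 * (1 - (Real.tanh (Real.sqrt 2 / 2 * y)) ^ 2)


lemma my_continuous_tanh : Continuous Real.tanh := by
  have h : Real.tanh = fun x => Real.sinh x / Real.cosh x := funext Real.tanh_eq_sinh_div_cosh
  rw [h]
  exact Real.continuous_sinh.div Real.continuous_cosh fun x => (Real.cosh_pos x).ne'

lemma one_sub_tanh_sq (u : ℝ) : 1 - Real.tanh u ^ 2 = 1 / Real.cosh u ^ 2 := by
  have h := Real.cosh_sq_sub_sinh_sq u
  have hc := Real.cosh_pos u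
  rw [Real.tanh_eq_sinh_div_cosh]
  field_simp
  exact h

lemma my_hasDerivAt_tanh (x : ℝ) : HasDerivAt Real.tanh (1 - Real.tanh x ^ 2) x := by
  have h : HasDerivAt (fun x => Real.sinh x / Real.cosh x)
      ((Real.cosh x * Real.cosh x - Real.sinh x * Real.sinh x) / Real.cosh x ^ 2) x :=
    (Real.hasDerivAt_sinh x).div (Real.hasDerivAt_cosh x) (Real.cosh_pos x).ne'
  have heq : Real.tanh = fun x => Real.sinh x / Real.cosh x := funext Real.tanh_eq_sinh_div_cosh
  rw [one_sub_tanh_sq, heq]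
  convert h using 1
  have h2 := Real.cosh_sq_sub_sinh_sq x
  have hc := (Real.cosh_pos x).ne'
  field_simp
  nlinarith

lemma tanh_eq_exp' (x : ℝ) : Real.tanh x = (1 - Real.exp (-(2*x))) / (1 + Real.exp (-(2*x))) := by
  have h1 : Real.exp (-(2*x)) = Real.exp (-x) * Real.exp (-x) := by
    rw [← Real.exp_add]; ring_nf
  have h2 : Real.exp x * Real.exp (-x) = 1 := by rw [← Real.exp_add]; simp
  have h3 : (0:ℝ) < Real.exp x + Real.exp (-x) := by positivity
  have h4 : (0:ℝ) < 1 + Real.exp (-(2*x)) := by positivity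
  have hc := (Real.cosh_pos x).ne'
  rw [Real.tanh_eq_sinh_div_cosh, Real.sinh_eq, Real.cosh_eq, h1] at *
  field_simp
  ring_nf
  linear_combination (2 * Real.exp (-x)) * h2

lemma tendsto_tanh_atTop' : Tendsto Real.tanh atTop (𝓝 1) := by
  have h : Tendsto (fun x : ℝ => Real.exp (-(2*x))) atTop (𝓝 0) := by
    apply Real.tendsto_exp_atBot.comp
    exact tendsto_neg_atTop_atBot.comp (tendsto_id.const_mul_atTop two_pos)
  have h2 := ((tendsto_const_nhds (x := (1:ℝ))).sub h).div ((tendsto_const_nhds (x := (1:ℝ))).add h) (by norm_num : (1:ℝ) + 0 ≠ 0)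
  simp only [sub_zero, add_zero, div_one] at h2
  exact h2.congr fun x => (tanh_eq_exp' x).symm

lemma tendsto_tanh_atBot' : Tendsto Real.tanh atBot (𝓝 (-1)) := by
  have h := (tendsto_tanh_atTop'.comp tendsto_neg_atBot_atTop).neg
  simp only [Function.comp_def, Real.tanh_neg, neg_neg] at h
  exact h



lemma cosh_ge' (u : ℝ) : Real.exp |u| / 2 ≤ Real.cosh u := by
  rw [Real.cosh_eq]
  rcases abs_cases u with ⟨h, _⟩ | ⟨h, _⟩ <;> rw [h] <;>
    nlinarith [Real.exp_pos u, Real.exp_pos (-u)]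

lemma Wh_nonneg (y : ℝ) : 0 ≤ Wh y := by
  apply mul_nonneg (sq_nonneg _)
  rw [one_sub_tanh_sq]; positivity

lemma Wh_even (y : ℝ) : Wh (-y) = Wh y := by
  simp [Wh, mul_neg, Real.tanh_neg, neg_sq]

lemma Wh_continuous : Continuous Wh := by
  have h : Continuous fun y : ℝ => Real.tanh (Real.sqrt 2 / 2 * y) :=
    my_continuous_tanh.comp (continuous_const.mul continuous_id)
  exact (h.pow 2).mul (continuous_const.sub (h.pow 2))

lemma Wh_le (y : ℝ) : Wh y ≤ 4 * Real.exp (-(Real.sqrt 2 * |y|)) := by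
  set u := Real.sqrt 2 / 2 * y with hu
  have h1 : Wh y ≤ 1 - Real.tanh u ^ 2 := by
    have h0 : 0 ≤ 1 - Real.tanh u ^ 2 := by rw [one_sub_tanh_sq]; positivity
    have ht1 : Real.tanh u ^ 2 ≤ 1 := by linarith
    calc Wh y = Real.tanh u ^ 2 * (1 - Real.tanh u ^ 2) := rfl
    _ ≤ 1 * (1 - Real.tanh u ^ 2) := mul_le_mul_of_nonneg_right ht1 h0
    _ = 1 - Real.tanh u ^ 2 := one_mul _
  have h2 : Real.exp |u| / 2 ≤ Real.cosh u := cosh_ge' u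
  have h3 : (0:ℝ) < Real.exp |u| / 2 := by positivity
  have h4 : 1 - Real.tanh u ^ 2 ≤ 4 * Real.exp (-(2 * |u|)) := by
    rw [one_sub_tanh_sq]
    have h5 : (Real.exp |u| / 2) ^ 2 ≤ Real.cosh u ^ 2 := by nlinarith [Real.cosh_pos u]
    have h6 : 1 / Real.cosh u ^ 2 ≤ 1 / (Real.exp |u| / 2) ^ 2 :=
      one_div_le_one_div_of_le (by positivity) h5
    calc 1 / Real.cosh u ^ 2 ≤ 1 / (Real.exp |u| / 2) ^ 2 := h6
    _ = 4 * Real.exp (-(2 * |u|)) := by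
        rw [Real.exp_neg]
        rw [show (2:ℝ) * |u| = |u| + |u| by ring, Real.exp_add]
        field_simp
        ring
  have h7 : 2 * |u| = Real.sqrt 2 * |y| := by
    rw [hu, abs_mul, abs_of_nonneg (by positivity : (0:ℝ) ≤ Real.sqrt 2 / 2)]
    ring
  rw [h7] at h4
  linarith

lemma one_le_rpow' {x q : ℝ} (hx : 1 ≤ x) (hq : 0 ≤ q) : 1 ≤ x ^ q := by
  have := Real.rpow_le_rpow zero_le_one hx hq
  simpa using this

lemma integrable_comp_abs' {f : ℝ → ℝ} (hf : IntegrableOn (fun x => f |x|) (Set.Ioi 0)) :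
    Integrable fun x => f |x| := by
  have int_Iic : IntegrableOn (fun x ↦ f |x|) (Iic 0) := by
    rw [← Measure.map_neg_eq_self (volume : Measure ℝ)]
    have m : MeasurableEmbedding fun x : ℝ => -x := (Homeomorph.neg ℝ).measurableEmbedding
    rw [m.integrableOn_map_iff]
    simp_rw [Function.comp_def, abs_neg, neg_preimage, neg_Iic, neg_zero]
    exact (integrableOn_Ici_iff_integrableOn_Ioi).mpr hf
  rw [← integrableOn_univ, ← Set.Iic_union_Ioi (a := (0:ℝ))]
  exact int_Iic.union hf

lemma integrable_poly_exp (q : ℝ) (hq : 0 ≤ q) :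
    Integrable fun y : ℝ => (1 + |y|) ^ q * Real.exp (-(Real.sqrt 2 * |y|)) := by
  have hs2 : (0:ℝ) < Real.sqrt 2 := by positivity
  have key : IntegrableOn (fun x : ℝ => (1 + x) ^ q * Real.exp (-(Real.sqrt 2 * x))) (Set.Ioi 0) := by
    have h1 : IntegrableOn (fun x : ℝ => x ^ q * Real.exp (-Real.sqrt 2 * x)) (Ioi 0) := by
      have := integrableOn_rpow_mul_exp_neg_mul_rpow (s := q) (p := 1) (by linarith) one_pos hs2
      simpa [Real.rpow_one] using this
    have h2 : IntegrableOn (fun x : ℝ => Real.exp (-Real.sqrt 2 * x)) (Ioi 0) :=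
      exp_neg_integrableOn_Ioi 0 hs2
    have h3 := (h2.const_mul ((2:ℝ)^q)).add (h1.const_mul ((2:ℝ)^q))
    apply Integrable.mono' h3
    · apply ContinuousOn.aestronglyMeasurable ?_ measurableSet_Ioi
      apply ContinuousOn.mul
      · apply ContinuousOn.rpow_const (by fun_prop)
        intro x hx
        left
        have : (0:ℝ) < x := hx
        positivity
      · fun_prop
    · filter_upwards [ae_restrict_mem measurableSet_Ioi] with x hx
      have hx0 : (0:ℝ) < x := hx
      have he : (0:ℝ) < Real.exp (-(Real.sqrt 2 * x)) := Real.exp_pos _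
      have hb : (1 + x) ^ q ≤ 2 ^ q + 2 ^ q * x ^ q := by
        rcases le_total x 1 with hx1 | hx1
        · have : (1 + x) ^ q ≤ 2 ^ q :=
            Real.rpow_le_rpow (by positivity) (by linarith) hq
          nlinarith [Real.rpow_nonneg hx0.le q, Real.rpow_nonneg (by norm_num : (0:ℝ) ≤ 2) q]
        · have h2x : (1:ℝ) + x ≤ 2 * x := by linarith
          have : (1 + x) ^ q ≤ (2 * x) ^ q :=
            Real.rpow_le_rpow (by positivity) h2x hq
          rw [Real.mul_rpow (by norm_num) hx0.le] at this
          nlinarith [Real.rpow_nonneg (by norm_num : (0:ℝ) ≤ 2) q]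
      rw [Real.norm_eq_abs, abs_of_nonneg (by positivity)]
      have := mul_le_mul_of_nonneg_right hb he.le
      calc (1 + x) ^ q * Real.exp (-(Real.sqrt 2 * x))
          ≤ (2 ^ q + 2 ^ q * x ^ q) * Real.exp (-(Real.sqrt 2 * x)) := this
      _ = 2 ^ q * Real.exp (-Real.sqrt 2 * x) + 2 ^ q * (x ^ q * Real.exp (-Real.sqrt 2 * x)) := by
          rw [neg_mul]; ring
  exact integrable_comp_abs' (f := fun t => (1 + t) ^ q * Real.exp (-(Real.sqrt 2 * t)))
    (key.congr_fun (fun x hx => by rw [abs_of_pos hx]) measurableSet_Ioi)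

lemma Wh_integrable : Integrable Wh := by
  have h := (integrable_poly_exp 0 le_rfl).const_mul 4
  apply Integrable.mono' h Wh_continuous.aestronglyMeasurable
  filter_upwards with y
  rw [Real.norm_eq_abs, abs_of_nonneg (Wh_nonneg y)]
  simpa [Real.rpow_zero] using Wh_le y



lemma Wh_integral : ∫ y : ℝ, Wh y = 2 * Real.sqrt 2 / 3 := by
  have hs2 : (0:ℝ) < Real.sqrt 2 := by positivity
  have hss : Real.sqrt 2 * Real.sqrt 2 = 2 := Real.mul_self_sqrt two_pos.le
  set F := fun y : ℝ => Real.sqrt 2 / 3 * Real.tanh (Real.sqrt 2 / 2 * y) ^ 3 with hF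
  have hder : ∀ y : ℝ, HasDerivAt F (Wh y) y := by
    intro y
    have h1 : HasDerivAt (fun y : ℝ => Real.sqrt 2 / 2 * y) (Real.sqrt 2 / 2) y := by
      simpa using (hasDerivAt_id y).const_mul (Real.sqrt 2 / 2)
    have h2 := (my_hasDerivAt_tanh (Real.sqrt 2 / 2 * y)).comp y h1
    have h3 := (h2.pow 3).const_mul (Real.sqrt 2 / 3)
    refine h3.congr_deriv (Eq.symm ?_)
    simp only [Function.comp_apply] at h3 ⊢
    show Wh y = _
    rw [Wh]
    set t := Real.tanh (Real.sqrt 2 / 2 * y)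
    push_cast
    linear_combination (-(t^2*(1-t^2))/2) * hss
  have htop : Tendsto F atTop (𝓝 (Real.sqrt 2 / 3)) := by
    have hu : Tendsto (fun y : ℝ => Real.sqrt 2 / 2 * y) atTop atTop :=
      tendsto_id.const_mul_atTop (by positivity)
    have := ((tendsto_tanh_atTop'.comp hu).pow 3).const_mul (Real.sqrt 2 / 3)
    simpa using this
  have hbot : Tendsto F atBot (𝓝 (-(Real.sqrt 2 / 3))) := by
    have hu : Tendsto (fun y : ℝ => Real.sqrt 2 / 2 * y) atBot atBot :=
      tendsto_id.const_mul_atBot (by positivity)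
    have := ((tendsto_tanh_atBot'.comp hu).pow 3).const_mul (Real.sqrt 2 / 3)
    norm_num at this
    convert this using 1
  have := MeasureTheory.integral_of_hasDerivAt_of_tendsto hder Wh_integrable hbot htop
  rw [this]; ring



lemma main_step (p : ℝ) (f : ℝ → ℝ) (hf : Continuous f)
    (C' : ℝ) (hbdf : ∀ x, |f x| ≤ C') (ht : ℝ)
    (hlim : Tendsto (fun x => |x| ^ p * f x) atTop (𝓝 ht))
    (C : ℝ) (hbd : ∀ x, |x| ^ p * |f x| ≤ C) :
    Tendsto (fun ψ : ℝ => |ψ| ^ p * ∫ y : ℝ, f (y + ψ / Real.sqrt 2) * Wh y) atTop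
      (𝓝 ((1 / 3) * (2:ℝ) ^ ((p + 3) / 2) * ht)) := by
  set s := Real.sqrt 2 with hs
  have hs0 : (0:ℝ) < s := by rw [hs]; positivity
  have hss : s * s = 2 := Real.mul_self_sqrt two_pos.le
  have hs1 : (1:ℝ) ≤ s := by nlinarith
  have hC : 0 ≤ C := le_trans (by positivity) (hbd 1)
  have hC' : 0 ≤ C' := le_trans (abs_nonneg _) (hbdf 0)
  set q := |p| with hq
  have hq0 : 0 ≤ q := abs_nonneg p
  set a := 2 * s with ha
  have ha1 : (1:ℝ) ≤ a := by rw [ha]; linarith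
  have ha0 : (0:ℝ) < a := lt_of_lt_of_le one_pos ha1
  set K := a ^ q * (C + C') with hK
  have haq1 : (1:ℝ) ≤ a ^ q := one_le_rpow' ha1 hq0
  have hK0 : 0 ≤ K := by
    rw [hK]; exact mul_nonneg (by positivity) (by linarith)
  -- the key uniform bound
  have key : ∀ ψ : ℝ, 1 ≤ ψ → ∀ y : ℝ, ψ ^ p * |f (y + ψ / s)| ≤ K * (1 + |y|) ^ q := by
    intro ψ hψ y
    have hψ0 : (0:ℝ) < ψ := lt_of_lt_of_le one_pos hψ
    have h1y : (1:ℝ) ≤ 1 + |y| := by simp [abs_nonneg]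
    have h1yq : (1:ℝ) ≤ (1 + |y|) ^ q := one_le_rpow' h1y hq0
    rcases le_or_gt (|y|) (ψ / a) with hyc | hyc
    · -- near-field: x = y + ψ/s is comparable to ψ
      set x := y + ψ / s with hx
      have hdiv : ψ / s - ψ / a = ψ / a := by
        rw [ha]; field_simp; ring
      have hxl : ψ / a ≤ x := by
        have h := neg_abs_le y
        have : -(ψ / a) ≤ y := by linarith
        rw [hx]; linarith [hdiv]
      have hx0 : (0:ℝ) < x := lt_of_lt_of_le (by positivity) hxl
      have hxu : x ≤ ψ / s + ψ / a := by
        have := le_abs_self y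
        rw [hx]; linarith
      have ht1 : ψ / x ≤ a := by
        rw [div_le_iff₀ hx0]
        have h2 : a * (ψ / a) ≤ a * x := mul_le_mul_of_nonneg_left hxl ha0.le
        rw [mul_div_cancel₀ _ ha0.ne'] at h2
        linarith
      have ht2 : 1 / a ≤ ψ / x := by
        rw [div_le_div_iff₀ ha0 hx0]
        have e1 : ψ / s ≤ ψ := by rw [div_le_iff₀ hs0]; nlinarith
        have e2 : ψ / a ≤ ψ := by rw [div_le_iff₀ ha0]; nlinarith
        have ha2 : (2:ℝ) ≤ a := by rw [ha]; linarith
        have h2ψ : 2 * ψ ≤ ψ * a := by nlinarith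
        calc 1 * x = x := one_mul x
        _ ≤ ψ / s + ψ / a := hxu
        _ ≤ ψ + ψ := add_le_add e1 e2
        _ = 2 * ψ := by ring
        _ ≤ ψ * a := h2ψ
      have htp3 : (ψ / x) ^ p ≤ a ^ q := by
        rcases le_or_gt 0 p with hp | hp
        · have h := Real.rpow_le_rpow (by positivity) ht1 hp
          rwa [hq, abs_of_nonneg hp]
        · have h := Real.rpow_le_rpow_of_nonpos (by positivity : (0:ℝ) < 1/a) ht2 hp.le
          have he : (1/a : ℝ) ^ p = a ^ (-p) := by
            rw [one_div, Real.inv_rpow ha0.le, ← Real.rpow_neg ha0.le]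
          rw [he] at h
          rwa [hq, abs_of_neg hp]
      have heq : ψ ^ p = (ψ / x) ^ p * x ^ p := by
        rw [Real.div_rpow hψ0.le hx0.le, div_mul_cancel₀]
        exact (Real.rpow_pos_of_pos hx0 p).ne'
      have hbx := hbd x
      rw [abs_of_pos hx0] at hbx
      calc ψ ^ p * |f x| = (ψ / x) ^ p * (x ^ p * |f x|) := by rw [heq]; ring
      _ ≤ a ^ q * C := by
          apply mul_le_mul htp3 hbx (by positivity) (by positivity)
      _ ≤ a ^ q * C * (1 + |y|) ^ q := le_mul_of_one_le_right (by positivity) h1yq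
      _ ≤ K * (1 + |y|) ^ q := by
          apply mul_le_mul_of_nonneg_right ?_ (by positivity)
          rw [hK]
          apply mul_le_mul_of_nonneg_left (by linarith) (by positivity)
    · -- far-field: use the uniform bound on f
      have hψa : ψ ≤ a * (1 + |y|) := by
        rw [div_lt_iff₀ ha0] at hyc
        nlinarith
      have hfb := hbdf (y + ψ / s)
      have hfb0 : (0:ℝ) ≤ |f (y + ψ / s)| := abs_nonneg _
      rcases le_or_gt 0 p with hp | hp
      · have h1 : ψ ^ p ≤ (a * (1 + |y|)) ^ p := Real.rpow_le_rpow hψ0.le hψa hp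
        rw [Real.mul_rpow ha0.le (by positivity)] at h1
        have hqp : q = p := abs_of_nonneg hp
        calc ψ ^ p * |f (y + ψ / s)| ≤ (a ^ p * (1 + |y|) ^ p) * C' := by
              apply mul_le_mul h1 hfb hfb0 (by positivity)
        _ ≤ K * (1 + |y|) ^ q := by
              rw [hK, hqp]
              have h2 : a ^ p * (1 + |y|) ^ p * C' ≤ a ^ p * (1 + |y|) ^ p * (C + C') := by
                apply mul_le_mul_of_nonneg_left (by linarith) (by positivity)
              calc a ^ p * (1 + |y|) ^ p * C' ≤ a ^ p * (1 + |y|) ^ p * (C + C') := h2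
              _ = a ^ p * (C + C') * (1 + |y|) ^ p := by ring
      · have h1 : ψ ^ p ≤ 1 := by
          have h := Real.rpow_le_rpow_of_nonpos one_pos hψ hp.le
          simpa using h
        calc ψ ^ p * |f (y + ψ / s)| ≤ 1 * C' := by
              apply mul_le_mul h1 hfb hfb0 zero_le_one
        _ = C' := one_mul _
        _ ≤ K * (1 + |y|) ^ q := by
              calc C' ≤ (C + C') * 1 := by linarith
              _ ≤ ((C + C') * (a ^ q)) * (1 + |y|) ^ q := by
                  apply mul_le_mul ?_ h1yq zero_le_one (by positivity)
                  nlinarith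
              _ = K * (1 + |y|) ^ q := by rw [hK]; ring
  -- pointwise limits
  have hlim_pt : ∀ y : ℝ, Tendsto (fun ψ : ℝ => |ψ| ^ p * f (y + ψ / s)) atTop
      (𝓝 (s ^ p * ht)) := by
    intro y
    have hu : Tendsto (fun ψ : ℝ => y + ψ / s) atTop atTop :=
      tendsto_atTop_add_const_left atTop y (tendsto_id.atTop_div_const hs0)
    have h1 : Tendsto (fun ψ : ℝ => |y + ψ / s| ^ p * f (y + ψ / s)) atTop (𝓝 ht) := hlim.comp hu
    have h2 : Tendsto (fun ψ : ℝ => y / ψ + 1 / s) atTop (𝓝 (0 + 1 / s)) :=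
      (tendsto_const_nhds.div_atTop tendsto_id).add tendsto_const_nhds
    rw [zero_add] at h2
    have h3 : Tendsto (fun ψ : ℝ => (y / ψ + 1 / s)⁻¹) atTop (𝓝 s) := by
      have := h2.inv₀ (by positivity)
      simpa using this
    have hev : ∀ᶠ ψ : ℝ in atTop, 0 < ψ ∧ s * (|y| + 1) < ψ := by
      filter_upwards [eventually_gt_atTop (0:ℝ), eventually_gt_atTop (s * (|y| + 1))] with ψ h1 h2
      exact ⟨h1, h2⟩
    have hu0 : ∀ ψ : ℝ, 0 < ψ → s * (|y| + 1) < ψ → 0 < y + ψ / s := by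
      intro ψ hψ0 hψy
      have h4 : |y| + 1 < ψ / s := by rw [lt_div_iff₀ hs0]; nlinarith
      nlinarith [neg_abs_le y]
    have h4 : Tendsto (fun ψ : ℝ => ψ / (y + ψ / s)) atTop (𝓝 s) := by
      apply h3.congr'
      filter_upwards [hev] with ψ hψ
      obtain ⟨hψ0, hψy⟩ := hψ
      have h5 := hu0 ψ hψ0 hψy
      have hrw : y / ψ + 1 / s = (y + ψ / s) / ψ := by
        field_simp
      rw [hrw, inv_div]
    have h5 : Tendsto (fun ψ : ℝ => (ψ / (y + ψ / s)) ^ p) atTop (𝓝 (s ^ p)) :=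
      h4.rpow_const (Or.inl hs0.ne')
    have h6 := h5.mul h1
    apply h6.congr'
    filter_upwards [hev] with ψ hψ
    obtain ⟨hψ0, hψy⟩ := hψ
    have hu0' := hu0 ψ hψ0 hψy
    rw [abs_of_pos hu0', abs_of_pos hψ0, Real.div_rpow hψ0.le hu0'.le]
    have hne := (Real.rpow_pos_of_pos hu0' p).ne'
    calc ψ ^ p / (y + ψ / s) ^ p * ((y + ψ / s) ^ p * f (y + ψ / s))
        = ψ ^ p * f (y + ψ / s) * ((y + ψ / s) ^ p / (y + ψ / s) ^ p) := by ring
    _ = ψ ^ p * f (y + ψ / s) := by rw [div_self hne, mul_one]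
  -- dominated convergence
  have hgcont : Continuous fun y : ℝ => K * ((1 + |y|) ^ q * Wh y) := by
    apply continuous_const.mul
    apply Continuous.mul ?_ Wh_continuous
    apply Continuous.rpow_const (by fun_prop)
    intro y; left; positivity
  have hgint : Integrable (fun y : ℝ => K * ((1 + |y|) ^ q * Wh y)) := by
    have h4 := ((integrable_poly_exp q hq0).const_mul 4).const_mul K
    apply Integrable.mono' h4 hgcont.aestronglyMeasurable
    filter_upwards with y
    have h1 : (0:ℝ) ≤ (1 + |y|) ^ q := by positivity
    rw [Real.norm_eq_abs, abs_of_nonneg (mul_nonneg hK0 (mul_nonneg h1 (Wh_nonneg y)))]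
    apply mul_le_mul_of_nonneg_left ?_ hK0
    calc (1 + |y|) ^ q * Wh y ≤ (1 + |y|) ^ q * (4 * Real.exp (-(s * |y|))) :=
          mul_le_mul_of_nonneg_left (Wh_le y) h1
    _ = 4 * ((1 + |y|) ^ q * Real.exp (-(s * |y|))) := by ring
  have hDCT := MeasureTheory.tendsto_integral_filter_of_dominated_convergence
      (μ := (volume : Measure ℝ)) (l := atTop)
      (F := fun (ψ : ℝ) (y : ℝ) => |ψ| ^ p * (f (y + ψ / s) * Wh y))
      (f := fun y : ℝ => s ^ p * ht * Wh y)
      (bound := fun y : ℝ => K * ((1 + |y|) ^ q * Wh y))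
      ?_ ?_ hgint ?_
  · -- assemble
    have hInts : ∀ ψ : ℝ, (∫ y : ℝ, |ψ| ^ p * (f (y + ψ / s) * Wh y))
        = |ψ| ^ p * ∫ y : ℝ, f (y + ψ / s) * Wh y := fun ψ =>
      MeasureTheory.integral_const_mul _ _
    have hRHS : (∫ y : ℝ, s ^ p * ht * Wh y) = (1 / 3) * (2:ℝ) ^ ((p + 3) / 2) * ht := by
      rw [MeasureTheory.integral_const_mul, Wh_integral]
      have h2p : s ^ p = (2:ℝ) ^ (p / 2) := by
        rw [hs, Real.sqrt_eq_rpow, ← Real.rpow_mul two_pos.le]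
        congr 1; ring
      have h32 : (2:ℝ) ^ ((p + 3) / 2) = (2:ℝ) ^ (p / 2) * (2 * s) := by
        rw [show (p + 3) / 2 = p / 2 + 3 / 2 by ring, Real.rpow_add two_pos]
        congr 1
        rw [show (3:ℝ) / 2 = 1 + 1 / 2 by norm_num, Real.rpow_add two_pos, Real.rpow_one,
          hs, Real.sqrt_eq_rpow]
      rw [h2p, h32]
      ring
    rw [hRHS] at hDCT
    exact hDCT.congr hInts
  · exact Filter.Eventually.of_forall fun ψ =>
      (continuous_const.mul ((hf.comp (by fun_prop)).mul Wh_continuous)).aestronglyMeasurable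
  · filter_upwards [eventually_ge_atTop (1:ℝ)] with ψ hψ
    apply Filter.Eventually.of_forall
    intro y
    have hψ0 : (0:ℝ) < ψ := lt_of_lt_of_le one_pos hψ
    have hWa : |Wh y| = Wh y := abs_of_nonneg (Wh_nonneg y)
    rw [Real.norm_eq_abs, abs_mul, abs_mul, hWa,
      abs_of_nonneg (Real.rpow_nonneg (abs_nonneg ψ) p), abs_of_pos hψ0]
    calc ψ ^ p * (|f (y + ψ / s)| * Wh y) = (ψ ^ p * |f (y + ψ / s)|) * Wh y := by ring
    _ ≤ (K * (1 + |y|) ^ q) * Wh y := mul_le_mul_of_nonneg_right (key ψ hψ y) (Wh_nonneg y)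
    _ = K * ((1 + |y|) ^ q * Wh y) := by ring
  · apply Filter.Eventually.of_forall
    intro y
    have := (hlim_pt y).mul_const (Wh y)
    simpa [mul_assoc] using this

/-- Algebraic decay lemma: if `|x|^p H'(x) → h̃±` as `x → ±∞` (with a uniform bound),
then the Melnikov function `S(ψ) = ∫ H'(y + ψ/√2) W_h(y) dy` satisfies
`|ψ|^p S(ψ) → (1/3)·2^{(p+3)/2}·h̃±` as `ψ → ±∞`. -/
theorem melnikov_algebraic_decay (p : ℝ)
    (H : ℝ → ℝ) (hH : ContDiff ℝ 1 H)
    (hbdH : ∃ C : ℝ, ∀ x : ℝ, |deriv H x| ≤ C)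
    (hcont : Continuous (deriv H))
    (htp htm : ℝ) (htp0 : htp ≠ 0) (htm0 : htm ≠ 0)
    (hlimp : Tendsto (fun x : ℝ => |x| ^ p * deriv H x) atTop (𝓝 htp))
    (hlimm : Tendsto (fun x : ℝ => |x| ^ p * deriv H x) atBot (𝓝 htm))
    (hbd : ∃ C : ℝ, ∀ x : ℝ, |x| ^ p * |deriv H x| ≤ C) :
    Tendsto (fun ψ : ℝ =>
        |ψ| ^ p * ∫ y : ℝ, deriv H (y + ψ / Real.sqrt 2) * Wh y) atTop
      (𝓝 ((1 / 3) * (2 : ℝ) ^ ((p + 3) / 2) * htp)) ∧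
    Tendsto (fun ψ : ℝ =>
        |ψ| ^ p * ∫ y : ℝ, deriv H (y + ψ / Real.sqrt 2) * Wh y) atBot
      (𝓝 ((1 / 3) * (2 : ℝ) ^ ((p + 3) / 2) * htm)) := by
  obtain ⟨C', hbdH'⟩ := hbdH
  obtain ⟨C, hbd'⟩ := hbd
  constructor
  · exact main_step p (deriv H) hcont C' hbdH' htp hlimp C hbd'
  · -- reduce the `atBot` statement to the `atTop` one via `x ↦ -x`
    have h1 : Tendsto (fun x : ℝ => |x| ^ p * deriv H (-x)) atTop (𝓝 htm) := by
      have := hlimm.comp tendsto_neg_atTop_atBot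
      simpa [Function.comp_def, abs_neg] using this
    have h2 := main_step p (fun x => deriv H (-x)) (hcont.comp continuous_neg) C'
        (fun x => hbdH' (-x)) htm h1 C (fun x => by simpa [abs_neg] using hbd' (-x))
    have h3 := h2.comp (tendsto_neg_atBot_atTop : Tendsto (fun ψ : ℝ => -ψ) atBot atTop)
    simp only [Function.comp_def, abs_neg, neg_div, neg_add_rev, neg_neg] at h3
    -- h3's integrand is `deriv H (ψ/√2 + -y)`; flip `y ↦ -y` using that `Wh` is even
    have hIeq : ∀ ψ : ℝ, (∫ y : ℝ, deriv H (ψ / Real.sqrt 2 + -y) * Wh y)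
        = ∫ y : ℝ, deriv H (y + ψ / Real.sqrt 2) * Wh y := by
      intro ψ
      have hneg := MeasureTheory.integral_neg_eq_self
        (fun y : ℝ => deriv H (ψ / Real.sqrt 2 + y) * Wh (-y)) (volume : Measure ℝ)
      simp only [neg_neg, Wh_even] at hneg
      rw [hneg]
      simp_rw [add_comm (ψ / Real.sqrt 2)]
    refine h3.congr fun ψ => ?_
    rw [hIeq ψ]
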